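/- Let n ≥ 3, let W n be the normalized n-qubit W-state, and let S ⊆ Fin n be nonempty with card S ≠ 1 and card S ≠ n − 1. Then W n does not admit a symmetric move for S: there is an orthonormal basis e of ℂ² (namely the computational basis) such that coeff (W n) e (fun i => if i ∈ S then l else 1 - l) = 0 for every l : Fin 2. (Together with the existence of symmetric moves for singletons and their complements, this is the characterization underlying Theorem 1 of the paper: the W-state allows k-symmetric moves only for k ∈ {1, n−1}.) -/

import Mathlib

/-- Coefficient of `ψ` on the product basis vector `⊗ᵢ e (f i)`. -/
noncomputable def coeff {n : ℕ} (ψ : (Fin n → Fin 2) → ℂ)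
    (e : Fin 2 → EuclideanSpace ℂ (Fin 2)) (f : Fin n → Fin 2) : ℂ :=
  ∑ x : Fin n → Fin 2, (∏ i, star ((e (f i)) (x i))) * ψ x

/-- The normalized `n`-qubit W-state: amplitude `1/√n` on computational-basis
strings with exactly one `1`, and `0` elsewhere. -/
noncomputable def Wstate (n : ℕ) : (Fin n → Fin 2) → ℂ := fun x =>
  if (Finset.univ.filter fun i => x i = 1).card = 1 then (1 / Real.sqrt n : ℂ) else 0

lemma coeff_basisFun {n : ℕ} (ψ : (Fin n → Fin 2) → ℂ) (f : Fin n → Fin 2) :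
    coeff ψ (fun j => EuclideanSpace.basisFun (Fin 2) ℂ j) f = ψ f := by
  unfold coeff
  rw [Fintype.sum_eq_single f]
  · simp
  · intro x hx
    obtain ⟨i, hi⟩ := Function.ne_iff.mp hx
    have hfactor : star (EuclideanSpace.basisFun (Fin 2) ℂ (f i) (x i)) = 0 := by
      simp [hi]
    rw [Finset.prod_eq_zero (Finset.mem_univ i) hfactor, zero_mul]

lemma Wstate_apply_of_card_ne_one {n : ℕ} {x : Fin n → Fin 2}
    (hx : (Finset.univ.filter fun i => x i = 1).card ≠ 1) : Wstate n x = 0 :=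
  if_neg hx

lemma filter_ite_mem_eq_one {n : ℕ} (S : Finset (Fin n)) (l : Fin 2) :
    (Finset.univ.filter fun i => (if i ∈ S then l else 1 - l) = 1) =
      if l = 1 then S else Sᶜ := by
  ext i
  fin_cases l <;> by_cases hi : i ∈ S <;> simp [hi]

theorem Wstate_no_intermediate_symmetric_move_general {n : ℕ}
    (S : Finset (Fin n))
    (h1 : S.card ≠ 1) (h2 : S.card ≠ n - 1) :
    ∃ e : OrthonormalBasis (Fin 2) ℂ (EuclideanSpace ℂ (Fin 2)),
      ∀ l : Fin 2,
        coeff (Wstate n) (fun j => e j) (fun i => if i ∈ S then l else 1 - l) = 0 := by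
  refine ⟨EuclideanSpace.basisFun (Fin 2) ℂ, fun l => ?_⟩
  rw [coeff_basisFun]
  apply Wstate_apply_of_card_ne_one
  rw [filter_ite_mem_eq_one]
  split_ifs
  · exact h1
  · have hS : S.card ≤ n := card_finset_fin_le S
    rw [Finset.card_compl, Fintype.card_fin]
    omega

theorem Wstate_no_intermediate_symmetric_move {n : ℕ} (hn : 3 ≤ n)
    (S : Finset (Fin n)) (hS : S.Nonempty)
    (h1 : S.card ≠ 1) (h2 : S.card ≠ n - 1) :
    ∃ e : OrthonormalBasis (Fin 2) ℂ (EuclideanSpace ℂ (Fin 2)),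
      ∀ l : Fin 2,
        coeff (Wstate n) (fun j => e j) (fun i => if i ∈ S then l else 1 - l) = 0 :=
  Wstate_no_intermediate_symmetric_move_general S h1 h2
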